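/- arXiv:2505.00567 — 2 statements merged into one kernel-verified Lean document; each statement's English description precedes it below -/
import Mathlib

section
/- Covering by permutations for the constant composition ensemble (Theorem 5): Let X be a finite alphabet. For every R̃ > 0 and ε > 0 there exists N₀ ∈ ℕ such that for all n ≥ N₀ and every n-type Q on X with H(Q) ≥ R̃ + ε, setting N = ⌈exp(nR̃)⌉, there exist k ∈ ℕ with k ≤ exp(n(H(Q) − R̃ + ε)) and permutations π_1, …, π_k of {1,…,n} such that ⋃_{i=1}^{k} π_i[C] = T_n(Q) holds for at least half of the N-tuples C ∈ T_n(Q)^N, i.e., for at least |T_n(Q)|^N / 2 of them (where π[C] denotes the set of permuted entries {π[x] : x an entry of C}). -/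
open scoped BigOperators Classical

noncomputable section

/-- A probability mass function on a finite alphabet. -/
def IsPMF {X : Type*} [Fintype X] (p : X → ℝ) : Prop :=
  (∀ a, 0 ≤ p a) ∧ ∑ a, p a = 1

/-- A (discrete memoryless) channel from `X` to `Y`: every row is a pmf. -/
def IsChannel {X Y : Type*} [Fintype X] [Fintype Y] (W : X → Y → ℝ) : Prop :=
  ∀ x, IsPMF (W x)

/-- Empirical distribution (type) of a sequence `x : Fin n → X`. -/
def empDist {X : Type*} [Fintype X] {n : ℕ} (x : Fin n → X) (a : X) : ℝ :=
  ((Finset.univ.filter fun t => x t = a).card : ℝ) / n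

/-- `P` is an `n`-type on `X`: a pmf all of whose masses are multiples of `1/n`. -/
def IsNType {X : Type*} [Fintype X] (n : ℕ) (P : X → ℝ) : Prop :=
  IsPMF P ∧ ∀ a, ∃ k : ℕ, (n : ℝ) * P a = k

/-- The type class `T_n(P)`: all sequences with empirical distribution `P`. -/
def typeClass {X : Type*} [Fintype X] (n : ℕ) (P : X → ℝ) : Finset (Fin n → X) :=
  Finset.univ.filter fun x => empDist x = P

/-- Shannon entropy (natural logarithm). -/
def shEntropy {X : Type*} [Fintype X] (p : X → ℝ) : ℝ :=
  ∑ a, Real.negMulLog (p a)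

/-- Kullback–Leibler divergence (real-valued, with the usual `log` conventions). -/
def dKL {X : Type*} [Fintype X] (q p : X → ℝ) : ℝ :=
  ∑ a, q a * Real.log (q a / p a)

/-- Conditional KL divergence `D(V‖W|P)`. -/
def condDKL {X Y : Type*} [Fintype X] [Fintype Y] (V W : X → Y → ℝ) (P : X → ℝ) : ℝ :=
  ∑ x, P x * dKL (V x) (W x)

def margFst {X Y : Type*} [Fintype X] [Fintype Y] (Q : X × Y → ℝ) (x : X) : ℝ :=
  ∑ y, Q (x, y)

def margSnd {X Y : Type*} [Fintype X] [Fintype Y] (Q : X × Y → ℝ) (y : Y) : ℝ :=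
  ∑ x, Q (x, y)

/-- Mutual information of a joint pmf (natural logarithm). -/
def mutualInfo {X Y : Type*} [Fintype X] [Fintype Y] (Q : X × Y → ℝ) : ℝ :=
  ∑ x, ∑ y, Q (x, y) * Real.log (Q (x, y) / (margFst Q x * margSnd Q y))

/-- Mutual information `I(P, V)` of the joint pmf `P(x)·V(y|x)`. -/
def miPV {X Y : Type*} [Fintype X] [Fintype Y] (P : X → ℝ) (V : X → Y → ℝ) : ℝ :=
  mutualInfo fun p => P p.1 * V p.1 p.2

/-- Positive part `|a|⁺ = max (a, 0)`. -/
def plusPart (a : ℝ) : ℝ := max a 0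

def margXY {X Y U : Type*} [Fintype X] [Fintype Y] [Fintype U] (Q : X × Y × U → ℝ) :
    X × Y → ℝ := fun p => ∑ u, Q (p.1, p.2, u)

def margYU {X Y U : Type*} [Fintype X] [Fintype Y] [Fintype U] (Q : X × Y × U → ℝ) :
    Y × U → ℝ := fun p => ∑ x, Q (x, p.1, p.2)

def margXU {X Y U : Type*} [Fintype X] [Fintype Y] [Fintype U] (Q : X × Y × U → ℝ) :
    X × U → ℝ := fun p => ∑ y, Q (p.1, y, p.2)

def margX3 {X Y U : Type*} [Fintype X] [Fintype Y] [Fintype U] (Q : X × Y × U → ℝ)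
    (x : X) : ℝ := ∑ y, ∑ u, Q (x, y, u)

def margY3 {X Y U : Type*} [Fintype X] [Fintype Y] [Fintype U] (Q : X × Y × U → ℝ)
    (y : Y) : ℝ := ∑ x, ∑ u, Q (x, y, u)

/-- Conditional mutual information `I_Q(X;U|Y)` of a joint pmf `Q` on `X × Y × U`. -/
def condMI3 {X Y U : Type*} [Fintype X] [Fintype Y] [Fintype U] (Q : X × Y × U → ℝ) : ℝ :=
  ∑ x, ∑ y, ∑ u, Q (x, y, u) *
    Real.log (Q (x, y, u) * margY3 Q y / (margXY Q (x, y) * margYU Q (y, u)))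

/-- `D(Q_{Y|X} ‖ W | P)` written via the joint pmf `Q_{XY}` (whose `X`-marginal is `P`). -/
def condDKLJoint {X Y : Type*} [Fintype X] [Fintype Y] (QXY : X × Y → ℝ)
    (W : X → Y → ℝ) (P : X → ℝ) : ℝ :=
  ∑ x, ∑ y, QXY (x, y) * Real.log (QXY (x, y) / (P x * W x y))

/-- Number of messages `M_n = ⌈exp (n R)⌉`. -/
def Mn (R : ℝ) (n : ℕ) : ℕ := ⌈Real.exp (n * R)⌉₊

/-- All codebooks of `M` codewords, each of constant composition `P`. -/
def ccCodebooks {X : Type*} [Fintype X] (n M : ℕ) (P : X → ℝ) :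
    Finset (Fin M → Fin n → X) :=
  Finset.univ.filter fun C => ∀ m, C m ∈ typeClass n P

/-- Ensemble-average decoding error probability of an `(n,R,B)`-code for the IB channel:
the expectation, over a codebook drawn uniformly from the constant composition ensemble of
type `P`, of the average over messages `m` of the probability (under the memoryless channel
`W`) that the decoder output differs from `m` when codeword `C m` is sent. -/
def avgError {X Y L : Type*} [Fintype X] [Fintype Y] (W : X → Y → ℝ) (n M : ℕ)
    (P : X → ℝ) (φ : (Fin n → Y) → L) (ψ : L → (Fin M → Fin n → X) → Fin M) : ℝ :=
  (∑ C ∈ ccCodebooks n M P, (M : ℝ)⁻¹ * ∑ m : Fin M, ∑ y : Fin n → Y,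
      if ψ (φ y) C = m then 0 else ∏ t, W (C m t) (y t)) /
    ((ccCodebooks n M P).card : ℝ)



/-!
Coordinate permutations act transitively on the type class `T = T_n(Q)`, whose size is
`t ≤ exp (n H(Q))`. For `k` uniformly random permutations `σ i` and a fixed `y ∈ T` the points
`σ i • y` are independent and uniform on `T`, so they all fall into a given `r`-subset with
probability `(r / t) ^ k`; a union bound over `y` and over the `r`-subsets yields permutations
giving every `y` more than `r` distinct translates as soon as `t ^ (r + 1) * r ^ k < t ^ k`.
A codebook of `M` words then misses `y` only if none of its words is such a translate, which
happens for at most `(t - r - 1) ^ M ≤ t ^ M * exp (-M (r + 1) / t)` codebooks, so for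
`r = ⌈t log (2t) / M⌉` at most half of the `t ^ M` codebooks miss some `y`. As `M ≥ exp (n R̃)`,
`r / t` is `exp (-n R̃)` up to polynomial factors, and `k ≈ exp (n (H(Q) - R̃ + ε))` then
satisfies the counting condition for all large `n`.
-/

open Finset MulAction

section RandomTranslates

variable {G α : Type*} [Group G] [Fintype G] [MulAction G α] [DecidableEq α]

lemma card_filter_smul_eq_of_mem_orbit {y z : α} (hz : z ∈ orbit G y) :
    #{g : G | g • y = z} = #{g : G | g • y = y} := by
  obtain ⟨g₀, rfl⟩ := hz
  refine card_equiv (Equiv.mulLeft g₀⁻¹) fun g => ?_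
  simp [mul_smul, inv_smul_eq_iff]

lemma card_filter_smul_mem {T S : Finset α} {y : α} (hT : (T : Set α) = orbit G y)
    (hS : S ⊆ T) : #{g : G | g • y ∈ S} = #S * #{g : G | g • y = y} := by
  rw [card_eq_sum_card_fiberwise (f := (· • y)) (s := {g : G | g • y ∈ S}) (t := S)
    fun g hg => (mem_filter.mp hg).2, ← smul_eq_mul, ← sum_const]
  refine sum_congr rfl fun z hz => ?_
  rw [filter_filter, ← card_filter_smul_eq_of_mem_orbit (hT ▸ hS hz : z ∈ orbit G y)]
  congr 1
  ext g
  simp only [mem_filter, mem_univ, true_and, and_iff_right_iff_imp]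
  exact fun h => h ▸ hz

lemma card_mul_card_filter_smul_mem {T S : Finset α} {y : α} (hT : (T : Set α) = orbit G y)
    (hS : S ⊆ T) : #{g : G | g • y ∈ S} * #T = #S * Fintype.card G := by
  have hG : Fintype.card G = #T * #{g : G | g • y = y} := by
    rw [← card_filter_smul_mem hT subset_rfl, ← card_univ]
    congr 1
    refine (filter_true_of_mem fun g _ => ?_).symm
    rw [← mem_coe, hT]
    exact mem_orbit y g
  rw [card_filter_smul_mem hT hS, hG]
  ring

lemma card_filter_card_image_smul_le {T : Finset α} {y : α} (hT : (T : Set α) = orbit G y)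
    {k r : ℕ} (hr : r ≤ #T) :
    #{g : Fin k → G | #(univ.image fun i => g i • y) ≤ r} * #T ^ k
      ≤ #T ^ r * (r * Fintype.card G) ^ k := by
  have hsub : ({g : Fin k → G | #(univ.image fun i => g i • y) ≤ r} : Finset _)
      ⊆ (T.powersetCard r).biUnion fun S => Fintype.piFinset fun _ => {h : G | h • y ∈ S} := by
    intro g hg
    have himg : (univ.image fun i => g i • y) ⊆ T := by
      intro z hz
      obtain ⟨i, -, rfl⟩ := mem_image.mp hz
      rw [← mem_coe, hT]
      exact mem_orbit y (g i)
    obtain ⟨S, hgS, hST, hS⟩ := exists_subsuperset_card_eq himg (mem_filter.mp hg).2 hr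
    refine mem_biUnion.mpr ⟨S, mem_powersetCard.mpr ⟨hST, hS⟩, Fintype.mem_piFinset.mpr ?_⟩
    exact fun i => mem_filter.mpr ⟨mem_univ _, hgS (mem_image_of_mem _ (mem_univ i))⟩
  calc #{g : Fin k → G | #(univ.image fun i => g i • y) ≤ r} * #T ^ k
      ≤ (∑ S ∈ T.powersetCard r, #{h : G | h • y ∈ S} ^ k) * #T ^ k := by
        gcongr
        refine (card_le_card hsub).trans (card_biUnion_le.trans_eq ?_)
        simp only [Fintype.card_piFinset_const]
    _ = ∑ S ∈ T.powersetCard r, (r * Fintype.card G) ^ k := by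
        rw [sum_mul]
        refine sum_congr rfl fun S hS => ?_
        obtain ⟨hST, rfl⟩ := mem_powersetCard.mp hS
        rw [← mul_pow, card_mul_card_filter_smul_mem hT hST]
    _ ≤ #T ^ r * (r * Fintype.card G) ^ k := by
        rw [sum_const, card_powersetCard, smul_eq_mul]
        gcongr
        exact Nat.choose_le_pow _ _

theorem exists_lt_card_image_smul {T : Finset α} (hT : ∀ y ∈ T, (T : Set α) = orbit G y)
    {k r : ℕ} (h : #T ^ (r + 1) * r ^ k < #T ^ k) :
    ∃ g : Fin k → G, ∀ y ∈ T, r < #(univ.image fun i => g i • y) := by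
  rcases T.eq_empty_or_nonempty with rfl | ⟨y₀, hy₀⟩
  · exact ⟨1, by simp⟩
  have hr : r ≤ #T := by
    by_contra! hTr
    have : #T ^ k ≤ #T ^ (r + 1) * r ^ k :=
      le_mul_of_one_le_of_le (Nat.one_le_pow _ _ (card_pos.mpr ⟨y₀, hy₀⟩))
        (Nat.pow_le_pow_left hTr.le k)
    omega
  set Bad := T.biUnion fun y => {g : Fin k → G | #(univ.image fun i => g i • y) ≤ r}
  suffices hBad : #Bad < #(univ : Finset (Fin k → G)) by
    obtain ⟨g, -, hg⟩ := exists_mem_notMem_of_card_lt_card hBad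
    refine ⟨g, fun y hy => not_le.mp fun hle => hg (mem_biUnion.mpr ⟨y, hy, ?_⟩)⟩
    exact mem_filter.mpr ⟨mem_univ _, hle⟩
  have hBad : #Bad * #T ^ k ≤ #T ^ (r + 1) * r ^ k * Fintype.card G ^ k :=
    calc #Bad * #T ^ k
        ≤ ∑ y ∈ T, #{g : Fin k → G | #(univ.image fun i => g i • y) ≤ r} * #T ^ k := by
          rw [← sum_mul]; gcongr; exact card_biUnion_le
      _ ≤ ∑ _y ∈ T, #T ^ r * (r * Fintype.card G) ^ k :=
          sum_le_sum fun y hy => card_filter_card_image_smul_le (hT y hy) hr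
      _ = #T ^ (r + 1) * r ^ k * Fintype.card G ^ k := by
          rw [sum_const, smul_eq_mul]; ring
  rw [card_univ, Fintype.card_fun, Fintype.card_fin]
  refine lt_of_mul_lt_mul_right (a := #T ^ k) ?_ (Nat.zero_le _)
  calc #Bad * #T ^ k ≤ #T ^ (r + 1) * r ^ k * Fintype.card G ^ k := hBad
    _ < #T ^ k * Fintype.card G ^ k := by gcongr
    _ = Fintype.card G ^ k * #T ^ k := mul_comm _ _

end RandomTranslates

lemma card_filter_exists_forall_notMem_le {α : Type*} [DecidableEq α] {T : Finset α}
    {A : α → Finset α} {s M : ℕ} (hA : ∀ y ∈ T, A y ⊆ T) (hs : ∀ y ∈ T, s ≤ #(A y)) :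
    #{C ∈ Fintype.piFinset fun _ : Fin M => T | ∃ y ∈ T, ∀ m, C m ∉ A y}
      ≤ #T * (#T - s) ^ M := by
  calc _ ≤ #(T.biUnion fun y => Fintype.piFinset fun _ : Fin M => T \ A y) := by
        refine card_le_card fun C hC => ?_
        obtain ⟨hCT, y, hy, hCy⟩ := mem_filter.mp hC
        refine mem_biUnion.mpr ⟨y, hy, Fintype.mem_piFinset.mpr fun m => ?_⟩
        exact mem_sdiff.mpr ⟨Fintype.mem_piFinset.mp hCT m, hCy m⟩
    _ ≤ ∑ y ∈ T, (#T - #(A y)) ^ M := by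
        refine card_biUnion_le.trans_eq (sum_congr rfl fun y hy => ?_)
        rw [Fintype.card_piFinset_const, card_sdiff_of_subset (hA y hy)]
    _ ≤ ∑ _y ∈ T, (#T - s) ^ M := by
        gcongr with y hy
        exact hs y hy
    _ = #T * (#T - s) ^ M := by rw [sum_const, smul_eq_mul]

section Estimates

open Real

lemma two_mul_mul_sub_pow_le_pow {t s M : ℕ} (hst : s ≤ t) (h : t * log (2 * t) ≤ M * s) :
    2 * (t * (t - s) ^ M) ≤ t ^ M := by
  rcases Nat.eq_zero_or_pos t with rfl | ht
  · simp
  have ht' : (0 : ℝ) < t := by exact_mod_cast ht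
  have hsub : ((t - s : ℕ) : ℝ) ≤ t * exp (-(s / t)) := by
    rw [Nat.cast_sub hst]
    calc (t : ℝ) - s = t * (1 - s / t) := by field_simp
      _ ≤ t * exp (-(s / t)) := by gcongr; exact one_sub_le_exp_neg _
  have hexp : 2 * t * exp (-(M * s / t)) ≤ 1 := by
    calc 2 * t * exp (-(M * s / t)) ≤ 2 * t * exp (-log (2 * t)) := by
          gcongr
          rwa [le_div_iff₀ ht', mul_comm]
      _ = 1 := by rw [exp_neg, exp_log (by positivity)]; field_simp
  have : (2 * (t * (t - s : ℕ) ^ M) : ℝ) ≤ t ^ M :=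
    calc (2 * (t * (t - s : ℕ) ^ M) : ℝ) ≤ 2 * (t * (t * exp (-(s / t))) ^ M) := by gcongr
      _ = t ^ M * (2 * t * exp (-(M * s / t))) := by
        rw [mul_pow, ← exp_nat_mul]; ring_nf
      _ ≤ t ^ M := mul_le_of_le_one_right (by positivity) hexp
  exact_mod_cast this

lemma eventually_mul_lt_exp (a : ℝ) {c : ℝ} (hc : 0 < c) :
    ∀ᶠ n : ℕ in Filter.atTop, a * n < exp (n * c) := by
  have hlim := (tendsto_exp_div_pow_atTop 1).comp
    (tendsto_natCast_atTop_atTop.const_mul_atTop hc)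
  filter_upwards [hlim.eventually_gt_atTop (a / c), Filter.eventually_gt_atTop 0] with n hn hn0
  have hcn : (0 : ℝ) < c * n := by positivity
  simp only [Function.comp_apply, pow_one, lt_div_iff₀ hcn] at hn
  calc a * n = a / c * (c * n) := by field_simp
    _ < exp (n * c) := by rw [mul_comm (n : ℝ)]; exact hn

lemma pow_succ_mul_pow_lt_pow_of_log {t r k : ℕ} (ht : 0 < t) (hr : 0 < r)
    (h : (r + 1) * log t < k * log (t / r)) : t ^ (r + 1) * r ^ k < t ^ k := by
  have : ((t ^ (r + 1) * r ^ k : ℕ) : ℝ) < (t ^ k : ℕ) := by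
    rw [log_div (by positivity) (by positivity)] at h
    push_cast
    rw [← log_lt_log_iff (by positivity) (by positivity), log_mul (by positivity) (by positivity),
      log_pow, log_pow, log_pow]
    push_cast
    linarith
  exact_mod_cast this

lemma pow_succ_mul_pow_lt_pow_of_le_mul {t r k : ℕ} {β L : ℝ} (hr : 0 < r)
    (hrt : r ≤ t * β) (htL : log t ≤ L) (h : 2 * (t * β) * L < k * -log β) :
    t ^ (r + 1) * r ^ k < t ^ k := by
  have hr' : (1 : ℝ) ≤ r := by exact_mod_cast hr
  have htβ : 0 < t * β := by linarith
  have ht : 0 < t := by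
    by_contra! h
    simp [Nat.le_zero.mp h] at htβ
  have hβ : 0 < β := pos_of_mul_pos_right htβ (Nat.cast_nonneg t)
  have hlogt : 0 ≤ log t := log_natCast_nonneg t
  apply pow_succ_mul_pow_lt_pow_of_log ht hr
  calc (r + 1) * log t ≤ 2 * (t * β) * L := by gcongr; linarith
    _ < k * -log β := h
    _ ≤ k * log (t / r) := by
        rw [← log_inv]
        gcongr
        rw [le_div_iff₀ (by positivity), ← div_eq_inv_mul, div_le_iff₀ hβ]
        exact hrt

lemma pow_succ_mul_pow_lt_pow {n t M k : ℕ} {H R ε D : ℝ} (hR : 0 < R) (ht : 2 ≤ t)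
    (htH : (t : ℝ) ≤ exp (n * H)) (htD : log (2 * t) ≤ n * D) (hM : exp (n * R) ≤ M)
    (hk3 : 3 ≤ k) (hk : exp (n * (H - R + ε)) ≤ 2 * k)
    (hD : 2 * D * n < exp (n * (R / 2))) (hDε : 16 * D ^ 2 / R * n < exp (n * ε)) :
    t ^ (⌈t * log (2 * t) / M⌉₊ + 1) * ⌈t * log (2 * t) / M⌉₊ ^ k < t ^ k := by
  set r := ⌈t * log (2 * t) / M⌉₊
  have ht' : (2 : ℝ) ≤ t := by exact_mod_cast ht
  have hM0 : (0 : ℝ) < M := (exp_pos _).trans_le hM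
  have hlog : 0 < log (2 * t) := log_pos (by linarith)
  rcases Nat.lt_or_ge 1 r with hr | hr
  swap
  · rw [le_antisymm hr (Nat.one_le_ceil_iff.mpr (by positivity)), one_pow, mul_one]
    exact Nat.pow_lt_pow_right (by omega) (by omega)
  have hnD : 0 < n * D := hlog.trans_le htD
  have hn : 0 < n := by
    by_contra! h
    simp [Nat.le_zero.mp h] at hnD
  set β := 2 * (n * D) / exp (n * R)
  have hrβ : (r : ℝ) ≤ t * β :=
    calc (r : ℝ) ≤ 2 * (t * log (2 * t) / M) := by
          refine Nat.ceil_le_two_mul ?_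
          have : (1 : ℝ) < t * log (2 * t) / M := by exact_mod_cast Nat.lt_ceil.mp hr
          linarith
      _ ≤ 2 * (t * (n * D) / exp (n * R)) := by gcongr
      _ = t * β := by ring
  have hβ : n * (R / 2) ≤ -log β := by
    rw [le_neg, log_le_iff_le_exp (by positivity), div_le_iff₀ (exp_pos _), ← exp_add]
    rw [show -(n * (R / 2)) + n * R = n * (R / 2) by ring]
    linarith
  apply pow_succ_mul_pow_lt_pow_of_le_mul (by omega) hrβ
    ((log_le_log (by positivity) (by linarith)).trans htD)
  have hsplit : exp (n * (H - R + ε)) = exp (n * H) / exp (n * R) * exp (n * ε) := by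
    rw [← exp_sub, ← exp_add]; ring_nf
  calc 2 * (t * β) * (n * D) ≤ 2 * (exp (n * H) * β) * (n * D) := by gcongr
    _ = exp (n * H) / exp (n * R) * n / 4 * (16 * n * D ^ 2) := by ring
    _ < exp (n * H) / exp (n * R) * n / 4 * (R * exp (n * ε)) := by
        refine mul_lt_mul_of_pos_left ?_ (by positivity)
        rw [div_mul_eq_mul_div, div_lt_iff₀ hR] at hDε
        linarith
    _ = exp (n * (H - R + ε)) / 2 * (n * (R / 2)) := by rw [hsplit]; ring
    _ ≤ k * -log β := by gcongr; linarith

lemma pow_eq_exp_neg_mul_negMulLog {q c : ℝ} {m : ℕ} (hq : 0 ≤ q) (hm : (m : ℝ) = c * q) :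
    q ^ m = exp (-(c * negMulLog q)) := by
  rcases hq.eq_or_lt with rfl | hq
  · have : m = 0 := by exact_mod_cast hm.trans (mul_zero c)
    simp [this]
  · rw [← exp_log (pow_pos hq m), log_pow, hm, negMulLog]
    ring_nf

end Estimates

section TypeClass

open Real Equiv

attribute [local instance] arrowAction

lemma perm_smul_eq_comp {X : Type*} {n : ℕ} (σ : Perm (Fin n)) (x : Fin n → X) :
    σ • x = x ∘ ⇑σ⁻¹ := rfl

variable {X : Type*} [Fintype X] {n : ℕ}

lemma mem_typeClass {Q : X → ℝ} {x : Fin n → X} : x ∈ typeClass n Q ↔ empDist x = Q := by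
  simp [typeClass]

lemma empDist_perm_smul (σ : Perm (Fin n)) (x : Fin n → X) : empDist (σ • x) = empDist x := by
  funext a
  simp only [empDist]
  congr 2
  exact card_equiv σ⁻¹ fun t => by simp [perm_smul_eq_comp]

lemma card_filter_eq_of_empDist_eq {x y : Fin n → X} (h : empDist x = empDist y) (a : X) :
    #{t | x t = a} = #{t | y t = a} := by
  rcases Nat.eq_zero_or_pos n with rfl | hn
  · simp
  have := congrFun h a
  rw [empDist, empDist, div_left_inj' (by positivity)] at this
  exact_mod_cast this

lemma exists_perm_smul_eq {x y : Fin n → X} (h : empDist x = empDist y) :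
    ∃ σ : Perm (Fin n), σ • x = y := by
  have hfib : ∀ a, Fintype.card {t // y t = a} = Fintype.card {t // x t = a} := fun a => by
    simp only [Fintype.card_subtype, card_filter_eq_of_empDist_eq h a]
  let e := ofFiberEquiv fun a => Fintype.equivOfCardEq (hfib a)
  exact ⟨e⁻¹, funext fun t => ofFiberEquiv_map _ t⟩

lemma coe_typeClass_eq_orbit {Q : X → ℝ} {y : Fin n → X} (hy : y ∈ typeClass n Q) :
    (typeClass n Q : Set (Fin n → X)) = orbit (Perm (Fin n)) y := by
  ext z
  rw [mem_coe, mem_typeClass, mem_orbit_iff]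
  rw [mem_typeClass] at hy
  refine ⟨fun hz => exists_perm_smul_eq (hy.trans hz.symm), ?_⟩
  rintro ⟨σ, rfl⟩
  exact (empDist_perm_smul σ y).trans hy

lemma card_filter_eq_mul_of_mem_typeClass {Q : X → ℝ} {x : Fin n → X}
    (hx : x ∈ typeClass n Q) (a : X) : (#{t | x t = a} : ℝ) = n * Q a := by
  rcases Nat.eq_zero_or_pos n with rfl | hn
  · simp
  rw [← mem_typeClass.mp hx, empDist]
  field_simp

lemma prod_eq_exp_neg_mul_shEntropy {Q : X → ℝ} (hQ : ∀ a, 0 ≤ Q a) {x : Fin n → X}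
    (hx : x ∈ typeClass n Q) : ∏ t, Q (x t) = exp (-(n * shEntropy Q)) := by
  calc ∏ t, Q (x t) = ∏ a, Q a ^ #{t | x t = a} := by
        rw [← prod_fiberwise' univ x Q]
        refine prod_congr rfl fun a _ => ?_
        exact prod_const (Q a)
    _ = ∏ a, exp (-(n * negMulLog (Q a))) := prod_congr rfl fun a _ =>
        pow_eq_exp_neg_mul_negMulLog (hQ a) (card_filter_eq_mul_of_mem_typeClass hx a)
    _ = exp (-(n * shEntropy Q)) := by
        rw [← exp_sum, shEntropy, mul_sum, ← sum_neg_distrib]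

lemma card_typeClass_le_exp {Q : X → ℝ} (hQ : IsPMF Q) :
    (#(typeClass n Q) : ℝ) ≤ exp (n * shEntropy Q) := by
  have h : #(typeClass n Q) * exp (-(n * shEntropy Q)) ≤ 1 :=
    calc #(typeClass n Q) * exp (-(n * shEntropy Q)) = ∑ x ∈ typeClass n Q, ∏ t, Q (x t) := by
          rw [sum_congr rfl fun x hx => prod_eq_exp_neg_mul_shEntropy hQ.1 hx, sum_const,
            nsmul_eq_mul]
      _ ≤ ∑ x : Fin n → X, ∏ t, Q (x t) :=
          sum_le_univ_sum_of_nonneg fun x => prod_nonneg fun t _ => hQ.1 (x t)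
      _ = 1 := by rw [← Fintype.prod_sum (fun _ : Fin n => Q), hQ.2, prod_const_one]
  rwa [exp_neg, ← div_eq_mul_inv, div_le_one (exp_pos _)] at h

lemma log_two_mul_card_le {T : Finset (Fin n → X)} (hT : T.Nonempty) (hn : 0 < n) :
    log (2 * #T) ≤ n * log (2 * Fintype.card X) := by
  rw [← log_pow]
  refine log_le_log (by positivity) ?_
  have hT : #T ≤ Fintype.card X ^ n := by
    simpa using card_le_univ T
  calc (2 * #T : ℝ) ≤ 2 ^ n * Fintype.card X ^ n := by
        gcongr
        · exact le_self_pow₀ one_le_two hn.ne'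
        · exact_mod_cast hT
    _ = (2 * Fintype.card X) ^ n := (mul_pow _ _ _).symm

lemma perm_smul_mem_typeClass {Q : X → ℝ} {y : Fin n → X} (σ : Perm (Fin n))
    (hy : y ∈ typeClass n Q) : σ • y ∈ typeClass n Q :=
  mem_typeClass.mpr ((empDist_perm_smul σ y).trans (mem_typeClass.mp hy))

lemma exists_perms_spread {Q : X → ℝ} {Rt ε : ℝ} {M : ℕ} (hn : 0 < n) (hQ : IsPMF Q)
    (hRt : 0 < Rt) (hε : 0 < ε) (hH : Rt + ε ≤ shEntropy Q) (hM : exp (n * Rt) ≤ M)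
    (h3 : 3 * n < exp (n * ε))
    (hD : 2 * log (2 * Fintype.card X) * n < exp (n * (Rt / 2)))
    (hDε : 16 * log (2 * Fintype.card X) ^ 2 / Rt * n < exp (n * ε)) :
    ∃ (k : ℕ) (σ : Fin k → Perm (Fin n)) (s : ℕ),
      (k : ℝ) ≤ exp (n * (shEntropy Q - Rt + ε)) ∧
      (∀ y ∈ typeClass n Q, s ≤ #(univ.image fun i => σ i • y)) ∧
      2 * (#(typeClass n Q) * (#(typeClass n Q) - s) ^ M) ≤ #(typeClass n Q) ^ M := by
  set T := typeClass n Q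
  set v := exp (n * (shEntropy Q - Rt + ε))
  have hv : 3 ≤ v := by
    have : (1 : ℝ) ≤ n := by exact_mod_cast hn
    calc (3 : ℝ) ≤ exp (n * ε) := by nlinarith
      _ ≤ v := exp_le_exp.mpr (by gcongr; linarith)
  rcases Nat.lt_or_ge 1 #T with ht | ht
  swap
  · refine ⟨1, 1, #T, ?_, fun y _ => ht.trans (card_pos.mpr (univ_nonempty.image _)), ?_⟩
    · exact_mod_cast (by norm_num : (1 : ℝ) ≤ 3).trans hv
    · have hM0 : M ≠ 0 := by exact_mod_cast ((exp_pos _).trans_le hM).ne'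
      rw [Nat.sub_self, zero_pow hM0]
      omega
  obtain ⟨y₀, hy₀⟩ := card_pos.mp (by omega : 0 < #T)
  set k := ⌊v⌋₊
  have hk3 : 3 ≤ k := Nat.le_floor (by exact_mod_cast hv)
  have hk : v ≤ 2 * k := by
    have : (3 : ℝ) ≤ k := by exact_mod_cast hk3
    linarith [Nat.lt_floor_add_one v]
  obtain ⟨σ, hσ⟩ := exists_lt_card_image_smul (fun y hy => coe_typeClass_eq_orbit hy)
    (pow_succ_mul_pow_lt_pow hRt ht (card_typeClass_le_exp hQ)
      (log_two_mul_card_le ⟨y₀, hy₀⟩ hn) hM hk3 hk hD hDε)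
  refine ⟨k, σ, _, Nat.floor_le (exp_pos _).le, hσ, two_mul_mul_sub_pow_le_pow ?_ ?_⟩
  · exact (hσ y₀ hy₀).trans_le (card_le_card (image_subset_iff.mpr fun i _ =>
      perm_smul_mem_typeClass (σ i) hy₀))
  · have hceil := Nat.le_ceil (#T * log (2 * #T) / M : ℝ)
    rw [div_le_iff₀ ((exp_pos _).trans_le hM)] at hceil
    push_cast
    linarith

lemma ccCodebooks_eq_piFinset (M : ℕ) (Q : X → ℝ) :
    ccCodebooks n M Q = Fintype.piFinset fun _ => typeClass n Q := by
  ext C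
  simp [ccCodebooks, Fintype.mem_piFinset]

lemma biUnion_image_comp_eq_typeClass {Q : X → ℝ} {M k : ℕ} {σ : Fin k → Perm (Fin n)}
    {C : Fin M → Fin n → X} (hC : ∀ m, C m ∈ typeClass n Q)
    (hcov : ∀ y ∈ typeClass n Q, ∃ m, C m ∈ univ.image fun i => σ i • y) :
    (univ.biUnion fun i => (univ.image C).image fun x => x ∘ σ i) = typeClass n Q := by
  refine Subset.antisymm (fun z hz => ?_) (fun y hy => ?_)
  · obtain ⟨i, -, m, -, rfl⟩ : ∃ i ∈ univ, ∃ m ∈ univ, C m ∘ σ i = z := by simpa using hz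
    simpa [perm_smul_eq_comp] using perm_smul_mem_typeClass (σ i)⁻¹ (hC m)
  · obtain ⟨m, hm⟩ := hcov y hy
    obtain ⟨i, -, hi⟩ := mem_image.mp hm
    simp only [mem_biUnion, mem_image, mem_univ, true_and, exists_exists_eq_and]
    exact ⟨i, m, by rw [← hi, perm_smul_eq_comp]; ext; simp⟩

lemma card_ccCodebooks_filter_ne_le {Q : X → ℝ} {M k s : ℕ} (σ : Fin k → Perm (Fin n))
    (hs : ∀ y ∈ typeClass n Q, s ≤ #(univ.image fun i => σ i • y)) :
    #{C ∈ ccCodebooks n M Q |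
        (univ.biUnion fun i => (univ.image C).image fun x => x ∘ σ i) ≠ typeClass n Q}
      ≤ #(typeClass n Q) * (#(typeClass n Q) - s) ^ M := by
  rw [ccCodebooks_eq_piFinset]
  refine (card_le_card fun C hC => ?_).trans (card_filter_exists_forall_notMem_le
    (fun y hy => image_subset_iff.mpr fun i _ => perm_smul_mem_typeClass (σ i) hy) hs)
  obtain ⟨hCT, hne⟩ := mem_filter.mp hC
  refine mem_filter.mpr ⟨hCT, ?_⟩
  by_contra! hcov
  exact hne (biUnion_image_comp_eq_typeClass (Fintype.mem_piFinset.mp hCT) hcov)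

end TypeClass

theorem covering_constant_composition_ensemble_general
    {X : Type*} [Fintype X] :
    ∀ Rt ε : ℝ, 0 < Rt → 0 < ε → ∃ N₀ : ℕ, ∀ n ≥ N₀, ∀ Q : X → ℝ,
      IsNType n Q → Rt + ε ≤ shEntropy Q →
      ∃ (k : ℕ) (π : Fin k → Equiv.Perm (Fin n)),
        (k : ℝ) ≤ Real.exp (n * (shEntropy Q - Rt + ε)) ∧
        ((ccCodebooks n (Mn Rt n) Q).card : ℝ) / 2 ≤
          (((ccCodebooks n (Mn Rt n) Q).filter fun C =>
            (Finset.univ.biUnion fun i =>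
              (Finset.univ.image C).image fun x => x ∘ (π i)) = typeClass n Q).card : ℝ) := by
  intro Rt ε hRt hε
  set D := Real.log (2 * Fintype.card X)
  obtain ⟨N₀, hN₀⟩ := Filter.eventually_atTop.mp <| (eventually_mul_lt_exp 3 hε).and <|
    (eventually_mul_lt_exp (2 * D) (half_pos hRt)).and <|
    (eventually_mul_lt_exp (16 * D ^ 2 / Rt) hε).and (Filter.eventually_gt_atTop 0)
  refine ⟨N₀, fun n hn Q hQ hH => ?_⟩
  obtain ⟨h3, hD, hDε, hn⟩ := hN₀ n hn
  obtain ⟨k, π, s, hk, hs, hsM⟩ :=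
    exists_perms_spread (M := Mn Rt n) hn hQ.1 hRt hε hH (Nat.le_ceil _) h3 hD hDε
  refine ⟨k, π, hk, ?_⟩
  have hbad := card_ccCodebooks_filter_ne_le (M := Mn Rt n) π hs
  simp only [ne_eq] at hbad
  have hsplit := card_filter_add_card_filter_not (s := ccCodebooks n (Mn Rt n) Q)
    (p := fun C => (univ.biUnion fun i => (univ.image C).image fun x => x ∘ π i) = typeClass n Q)
  have hall : #(ccCodebooks n (Mn Rt n) Q) = #(typeClass n Q) ^ Mn Rt n := by
    rw [ccCodebooks_eq_piFinset, Fintype.card_piFinset_const]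
  rw [div_le_iff₀ two_pos]
  exact_mod_cast (by linarith : #(ccCodebooks n (Mn Rt n) Q) ≤ _ * 2)

/-- **Theorem 5** (covering by permutations for the constant composition ensemble): for
every `R̃ > 0` and `ε > 0` and all large enough `n`, for every `n`-type `Q` with
`H(Q) ≥ R̃ + ε` and `N = ⌈exp (n R̃)⌉`, there are `k ≤ exp (n(H(Q) − R̃ + ε))` permutations
`π_1, …, π_k` of `{1,…,n}` such that at least half of the `N`-tuples `C ∈ T_n(Q)^N` satisfy
`⋃_i π_i[C] = T_n(Q)`. -/
theorem covering_constant_composition_ensemble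
    {X : Type*} [Fintype X] [Nonempty X] :
    ∀ Rt ε : ℝ, 0 < Rt → 0 < ε → ∃ N₀ : ℕ, ∀ n ≥ N₀, ∀ Q : X → ℝ,
      IsNType n Q → Rt + ε ≤ shEntropy Q →
      ∃ (k : ℕ) (π : Fin k → Equiv.Perm (Fin n)),
        (k : ℝ) ≤ Real.exp (n * (shEntropy Q - Rt + ε)) ∧
        ((ccCodebooks n (Mn Rt n) Q).card : ℝ) / 2 ≤
          (((ccCodebooks n (Mn Rt n) Q).filter fun C =>
            (Finset.univ.biUnion fun i =>
              (Finset.univ.image C).image fun x => x ∘ (π i)) = typeClass n Q).card : ℝ) :=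
  covering_constant_composition_ensemble_general
end
end

section
/- Conditional distribution of the constant composition distribution (Lemma 6): Let X be a finite alphabet, n ∈ ℕ, P an n-type on X, 1 ≤ i ≤ n−1, and let X^n = (X_1,…,X_n) be uniformly distributed on T_n(P). A prefix x^i = (x_1,…,x_i) ∈ X^i has positive probability under the law of (X_1,…,X_i) if and only if the function Q*(a) = (n·P(a) − i·P̂_{x^i}(a))/(n−i) is a pmf on X with (n−i)·Q*(a) ∈ ℕ for all a ∈ X (i.e., Q* is an (n−i)-type), where P̂_{x^i} is the empirical distribution of x^i. Moreover, for every such prefix x^i and every a ∈ X, P{X_{i+1} = a | (X_1,…,X_i) = x^i} = Q*(a). -/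
open scoped BigOperators Classical

noncomputable section

/-!
A sequence of `T_n(P)` with prefix `x^i` is the prefix followed by an arbitrary suffix of length
`n - i` and type `Q*`, so these sequences correspond to `T_{n-i}(Q*)`, which is nonempty exactly
when `Q*` is an `(n-i)`-type. Swapping position `i+1` with any later position preserves both the
type and the prefix, so every suffix position carries `a` equally often across these sequences;
double counting the occurrences of `a` in the suffixes then gives the conditional law `Q*`.
-/

open Finset

section SymbolCount

variable {X ι : Type*} [Fintype ι]

def symbolCount (x : ι → X) (a : X) : ℕ := #{t | x t = a}

theorem symbolCount_comp_equiv {κ : Type*} [Fintype κ] (x : ι → X) (σ : κ ≃ ι) :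
    symbolCount (x ∘ σ) = symbolCount x :=
  funext fun _ => card_equiv σ (by simp)

theorem sum_symbolCount [Fintype X] (x : ι → X) : ∑ a, symbolCount x a = Fintype.card ι :=
  (card_eq_sum_card_fiberwise fun t _ => mem_univ (x t)).symm

theorem symbolCount_append {i m : ℕ} (u : Fin i → X) (v : Fin m → X) (a : X) :
    symbolCount (Fin.append u v) a = symbolCount u a + symbolCount v a := by
  simp only [symbolCount, card_filter, Fin.sum_univ_add, Fin.append_left, Fin.append_right]

theorem exists_symbolCount_eq [Fintype X] {m : ℕ} (k : X → ℕ) (hk : ∑ a, k a = m) :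
    ∃ y : Fin m → X, symbolCount y = k := by
  let e : Fin m ≃ Σ a, Fin (k a) :=
    (Fintype.equivFinOfCardEq (by simp [hk])).symm
  refine ⟨fun t => (e t).1, funext fun a => ?_⟩
  calc symbolCount (fun t => (e t).1) a = #{p : Σ a, Fin (k a) | p.1 = a} :=
        card_equiv e (by simp)
    _ = k a := by
        rw [← Fintype.card_subtype, Fintype.card_congr (Equiv.sigmaSubtype a), Fintype.card_fin]

end SymbolCount

section TypeClass

variable {X : Type*} [Fintype X]

theorem empDist_eq_symbolCount_div {n : ℕ} (x : Fin n → X) (a : X) :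
    empDist x a = symbolCount x a / n := rfl

theorem natCast_mul_empDist {n : ℕ} (x : Fin n → X) (a : X) :
    (n : ℝ) * empDist x a = symbolCount x a := by
  rcases Nat.eq_zero_or_pos n with rfl | hn
  · simp [symbolCount]
  · rw [empDist_eq_symbolCount_div, mul_div_cancel₀ _ (by positivity)]

theorem mem_typeClass_iff {n : ℕ} (hn : n ≠ 0) (P : X → ℝ) (x : Fin n → X) :
    x ∈ typeClass n P ↔ ∀ a, (symbolCount x a : ℝ) = n * P a := by
  simp only [typeClass, mem_filter, mem_univ, true_and, funext_iff, empDist_eq_symbolCount_div,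
    div_eq_iff (Nat.cast_ne_zero.mpr hn : (n : ℝ) ≠ 0), mul_comm]

theorem comp_perm_mem_typeClass {n : ℕ} {P : X → ℝ} {x : Fin n → X} (hx : x ∈ typeClass n P)
    (σ : Equiv.Perm (Fin n)) : x ∘ σ ∈ typeClass n P := by
  simpa only [typeClass, mem_filter, mem_univ, true_and, funext_iff,
    empDist_eq_symbolCount_div, symbolCount_comp_equiv] using hx

theorem typeClass_nonempty_iff {m : ℕ} (hm : m ≠ 0) (Q : X → ℝ) :
    (typeClass m Q).Nonempty ↔ IsNType m Q := by
  have hm' : (m : ℝ) ≠ 0 := Nat.cast_ne_zero.mpr hm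
  constructor
  · rintro ⟨y, hy⟩
    have hQ : ∀ a, Q a = symbolCount y a / m := fun a => by
      rw [(mem_typeClass_iff hm Q y).mp hy a, mul_div_cancel_left₀ _ hm']
    refine ⟨⟨fun a => hQ a ▸ by positivity, ?_⟩, fun a => ⟨symbolCount y a, ?_⟩⟩
    · rw [sum_congr rfl fun a _ => hQ a, ← sum_div, ← Nat.cast_sum, sum_symbolCount,
        Fintype.card_fin, div_self hm']
    · rw [hQ, mul_div_cancel₀ _ hm']
  · rintro ⟨⟨-, hsum⟩, hk⟩
    choose k hk using hk
    have hksum : ∑ a, k a = m := by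
      have : ((∑ a, k a : ℕ) : ℝ) = m := by simp only [Nat.cast_sum, ← hk, ← mul_sum, hsum, mul_one]
      exact_mod_cast this
    obtain ⟨y, hy⟩ := exists_symbolCount_eq k hksum
    exact ⟨y, (mem_typeClass_iff hm Q y).mpr fun a => by rw [hy, hk]⟩

end TypeClass

section Exchangeability

variable {ι X : Type*} [DecidableEq ι]

theorem card_filter_apply_eq_of_swap_mem (S : Finset (ι → X)) {t t₀ : ι}
    (hS : ∀ x ∈ S, x ∘ Equiv.swap t t₀ ∈ S) (a : X) :
    #{x ∈ S | x t = a} = #{x ∈ S | x t₀ = a} := by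
  have hinv : ∀ x : ι → X, (x ∘ Equiv.swap t t₀) ∘ Equiv.swap t t₀ = x := fun x =>
    funext fun s => congrArg x (Equiv.swap_apply_self t t₀ s)
  refine card_nbij' (· ∘ Equiv.swap t t₀) (· ∘ Equiv.swap t t₀) ?_ ?_
    (fun x _ => hinv x) (fun x _ => hinv x)
  · intro x hx
    simp only [coe_filter, Set.mem_ofPred_eq, Function.comp_apply, Equiv.swap_apply_right] at hx ⊢
    exact ⟨hS x hx.1, hx.2⟩
  · intro x hx
    simp only [coe_filter, Set.mem_ofPred_eq, Function.comp_apply, Equiv.swap_apply_left] at hx ⊢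
    exact ⟨hS x hx.1, hx.2⟩

theorem card_mul_card_filter_apply_eq [Fintype ι] {κ : Type*} [Fintype κ] (S : Finset (ι → X))
    (e : κ → ι) (t₀ : ι) (hS : ∀ s, ∀ x ∈ S, x ∘ Equiv.swap (e s) t₀ ∈ S) (a : X) (k : ℝ)
    (hk : ∀ x ∈ S, (symbolCount (x ∘ e) a : ℝ) = k) :
    (Fintype.card κ : ℝ) * #{x ∈ S | x t₀ = a} = k * #S := by
  calc (Fintype.card κ : ℝ) * #{x ∈ S | x t₀ = a}
      = ∑ s : κ, (#{x ∈ S | x (e s) = a} : ℝ) := by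
        simp only [card_filter_apply_eq_of_swap_mem S (hS _) a, sum_const, card_univ,
          nsmul_eq_mul]
    _ = ∑ x ∈ S, (symbolCount (x ∘ e) a : ℝ) := by
        simp only [symbolCount, Function.comp_apply, card_filter, Nat.cast_sum]
        exact sum_comm
    _ = k * #S := by rw [sum_congr rfl hk, sum_const, nsmul_eq_mul, mul_comm]

end Exchangeability

section Prefix

variable {X : Type*} [Fintype X] {i m : ℕ}

def suffixType (P : X → ℝ) (xp : Fin i → X) (m : ℕ) (a : X) : ℝ :=
  (((i + m : ℕ) : ℝ) * P a - i * empDist xp a) / m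

def typeClassWithPrefix (P : X → ℝ) (xp : Fin i → X) (m : ℕ) : Finset (Fin (i + m) → X) :=
  (typeClass (i + m) P).filter fun x => ∀ t : Fin i, x (Fin.castAdd m t) = xp t

theorem append_mem_typeClass_iff (hm : m ≠ 0) (P : X → ℝ) (xp : Fin i → X) (y : Fin m → X) :
    Fin.append xp y ∈ typeClass (i + m) P ↔ y ∈ typeClass m (suffixType P xp m) := by
  rw [mem_typeClass_iff (by omega), mem_typeClass_iff hm]
  refine forall_congr' fun a => ?_
  rw [symbolCount_append, suffixType, mul_div_cancel₀ _ (Nat.cast_ne_zero.mpr hm),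
    natCast_mul_empDist xp, Nat.cast_add, eq_sub_iff_add_eq']

theorem append_comp_natAdd_of_mem_typeClassWithPrefix {P : X → ℝ} {xp : Fin i → X}
    {x : Fin (i + m) → X} (hx : x ∈ typeClassWithPrefix P xp m) :
    Fin.append xp (x ∘ Fin.natAdd i) = x := by
  have hxp : (fun t => x (Fin.castAdd m t)) = xp := funext (mem_filter.mp hx).2
  exact hxp ▸ Fin.append_castAdd_natAdd

theorem comp_natAdd_mem_typeClass (hm : m ≠ 0) {P : X → ℝ} {xp : Fin i → X}
    {x : Fin (i + m) → X} (hx : x ∈ typeClassWithPrefix P xp m) :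
    x ∘ Fin.natAdd i ∈ typeClass m (suffixType P xp m) := by
  rw [← append_mem_typeClass_iff hm, append_comp_natAdd_of_mem_typeClassWithPrefix hx]
  exact (mem_filter.mp hx).1

theorem card_typeClassWithPrefix (hm : m ≠ 0) (P : X → ℝ) (xp : Fin i → X) :
    #(typeClassWithPrefix P xp m) = #(typeClass m (suffixType P xp m)) := by
  refine card_nbij' (· ∘ Fin.natAdd i) (Fin.append xp)
    (fun x hx => comp_natAdd_mem_typeClass hm hx) (fun y hy => ?_)
    (fun x hx => append_comp_natAdd_of_mem_typeClassWithPrefix hx)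
    (fun y _ => funext (Fin.append_right xp y))
  exact mem_filter.mpr ⟨(append_mem_typeClass_iff hm P xp y).mpr hy, Fin.append_left xp y⟩

theorem comp_swap_mem_typeClassWithPrefix {P : X → ℝ} {xp : Fin i → X} {x : Fin (i + m) → X}
    (hx : x ∈ typeClassWithPrefix P xp m) {t t' : Fin (i + m)} (ht : i ≤ t) (ht' : i ≤ t') :
    x ∘ Equiv.swap t t' ∈ typeClassWithPrefix P xp m := by
  refine mem_filter.mpr ⟨comp_perm_mem_typeClass (mem_filter.mp hx).1 _, fun s => ?_⟩
  have hs : (Fin.castAdd m s : ℕ) < i := s.isLt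
  rw [Function.comp_apply, Equiv.swap_apply_of_ne_of_ne (by omega) (by omega)]
  exact (mem_filter.mp hx).2 s

theorem card_typeClassWithPrefix_pos_iff (hm : m ≠ 0) (P : X → ℝ) (xp : Fin i → X) :
    0 < #(typeClassWithPrefix P xp m) ↔ IsNType m (suffixType P xp m) := by
  rw [card_typeClassWithPrefix hm, card_pos, typeClass_nonempty_iff hm]

theorem card_filter_typeClassWithPrefix_apply_eq (hin : i < i + m) (P : X → ℝ)
    (xp : Fin i → X) (a : X) :
    (#{x ∈ typeClass (i + m) P |
        (∀ t : Fin i, x (Fin.castAdd m t) = xp t) ∧ x ⟨i, hin⟩ = a} : ℝ) =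
      suffixType P xp m a * #(typeClassWithPrefix P xp m) := by
  have hm : (m : ℝ) ≠ 0 := Nat.cast_ne_zero.mpr (by omega)
  have hcount := card_mul_card_filter_apply_eq (typeClassWithPrefix P xp m) (Fin.natAdd i)
    ⟨i, hin⟩ (fun s x hx => comp_swap_mem_typeClassWithPrefix hx (Nat.le_add_right i s) le_rfl)
    a (m * suffixType P xp m a) fun x hx =>
      (mem_typeClass_iff (by omega) _ _).mp (comp_natAdd_mem_typeClass (by omega) hx) a
  rw [Fintype.card_fin, typeClassWithPrefix, filter_filter, mul_assoc] at hcount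
  exact mul_left_cancel₀ hm hcount

end Prefix

theorem constant_composition_conditional_general
    {X : Type*} [Fintype X] (n i : ℕ) (hin : i < n)
    (P : X → ℝ) (xp : Fin i → X) :
    ((0 < ((typeClass n P).filter fun x =>
        ∀ t : Fin i, x (Fin.castLE hin.le t) = xp t).card) ↔
      IsNType (n - i) fun a => ((n : ℝ) * P a - (i : ℝ) * empDist xp a) / ((n - i : ℕ) : ℝ)) ∧
    ∀ a : X,
      ((((typeClass n P).filter fun x =>
          (∀ t : Fin i, x (Fin.castLE hin.le t) = xp t) ∧ x ⟨i, hin⟩ = a).card : ℝ)) =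
        (((n : ℝ) * P a - (i : ℝ) * empDist xp a) / ((n - i : ℕ) : ℝ)) *
          (((typeClass n P).filter fun x =>
            ∀ t : Fin i, x (Fin.castLE hin.le t) = xp t).card : ℝ) := by
  obtain ⟨m, rfl⟩ := Nat.exists_eq_add_of_le hin.le
  rw [Nat.add_sub_cancel_left]
  exact ⟨card_typeClassWithPrefix_pos_iff (by omega) P xp,
    card_filter_typeClassWithPrefix_apply_eq hin P xp⟩

/-- **Lemma 6** (conditional distribution of the constant composition distribution): let
`X^n` be uniform on `T_n(P)` and `1 ≤ i ≤ n−1`. A prefix `x^i` has positive probability iff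
`Q*(a) = (n·P(a) − i·P̂_{x^i}(a))/(n−i)` is an `(n−i)`-type, and in that case the conditional
law of the next coordinate given the prefix is `Q*`: the number of extensions with next
symbol `a` equals `Q*(a)` times the number of extensions. -/
theorem constant_composition_conditional
    {X : Type*} [Fintype X] (n i : ℕ) (hi1 : 1 ≤ i) (hin : i < n)
    (P : X → ℝ) (hP : IsNType n P) (xp : Fin i → X) :
    ((0 < ((typeClass n P).filter fun x =>
        ∀ t : Fin i, x (Fin.castLE hin.le t) = xp t).card) ↔
      IsNType (n - i) fun a => ((n : ℝ) * P a - (i : ℝ) * empDist xp a) / ((n - i : ℕ) : ℝ)) ∧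
    ∀ a : X,
      ((((typeClass n P).filter fun x =>
          (∀ t : Fin i, x (Fin.castLE hin.le t) = xp t) ∧ x ⟨i, hin⟩ = a).card : ℝ)) =
        (((n : ℝ) * P a - (i : ℝ) * empDist xp a) / ((n - i : ℕ) : ℝ)) *
          (((typeClass n P).filter fun x =>
            ∀ t : Fin i, x (Fin.castLE hin.le t) = xp t).card : ℝ) :=
  constant_composition_conditional_general n i hin P xp

end
end
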